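/- Let u₁,…,uₙ ∈ ℝ^q and positive weights d̃₁,…,d̃ₙ summing to 1. Suppose λ ∈ ℝ^q satisfies 1 − λᵀuᵢ > 0 for all i and ∑ᵢ d̃ᵢ uᵢ / (1 − λᵀuᵢ) = 0. Write λ = ρθ with ρ = ‖λ‖ and ‖θ‖ = 1. Then 0 = ∑ᵢ d̃ᵢ θᵀuᵢ + ρ ∑ᵢ d̃ᵢ (θᵀuᵢ)²/(1 − ρθᵀuᵢ). Consequently, ρ/(1+ρZ) · ∑ᵢ d̃ᵢ (θᵀuᵢ)² ≤ |∑ᵢ d̃ᵢ θᵀuᵢ|, where Z = maxᵢ ‖uᵢ‖. -/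
import Mathlib


open scoped RealInnerProductSpace

theorem stmt6 {n q : ℕ} (hn : 0 < n) (u : Fin n → EuclideanSpace ℝ (Fin q))
    (d : Fin n → ℝ) (hd : ∀ i, 0 < d i) (hds : ∑ i, d i = 1)
    (l : EuclideanSpace ℝ (Fin q)) (hl : l ≠ 0)
    (hpos : ∀ i, 0 < 1 - ⟪l, u i⟫)
    (hsol : ∑ i, (d i / (1 - ⟪l, u i⟫)) • u i = 0) :
    (0 = ∑ i, d i * ⟪‖l‖⁻¹ • l, u i⟫ +
        ‖l‖ * ∑ i, d i * ⟪‖l‖⁻¹ • l, u i⟫ ^ 2 / (1 - ‖l‖ * ⟪‖l‖⁻¹ • l, u i⟫)) ∧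
      ‖l‖ / (1 + ‖l‖ * (Finset.univ.sup' ⟨⟨0, hn⟩, Finset.mem_univ _⟩ fun i => ‖u i‖)) *
          ∑ i, d i * ⟪‖l‖⁻¹ • l, u i⟫ ^ 2 ≤
        |∑ i, d i * ⟪‖l‖⁻¹ • l, u i⟫| := by
  have hρ : (0:ℝ) < ‖l‖ := norm_pos_iff.mpr hl
  have hρ0 : (‖l‖:ℝ) ≠ 0 := ne_of_gt hρ
  have ht : ∀ i, ⟪(‖l‖⁻¹:ℝ) • l, u i⟫ = ‖l‖⁻¹ * ⟪l, u i⟫ := fun i =>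
    real_inner_smul_left _ _ _
  have hρt : ∀ i, ‖l‖ * ⟪(‖l‖⁻¹:ℝ) • l, u i⟫ = ⟪l, u i⟫ := by
    intro i; rw [ht i]; field_simp
  -- key: ∑ d i * ⟪l,u i⟫ / (1 - ⟪l,u i⟫) = 0
  have key : ∑ i, d i * ⟪l, u i⟫ / (1 - ⟪l, u i⟫) = 0 := by
    have := congrArg (fun v => ⟪l, v⟫) hsol
    simp only [inner_sum, real_inner_smul_right, inner_zero_right] at this
    rw [← this]
    exact Finset.sum_congr rfl fun i _ => by ring
  have hne : ∀ i, (1 - ⟪l, u i⟫) ≠ 0 := fun i => ne_of_gt (hpos i)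
  have part1 : (0:ℝ) = ∑ i, d i * ⟪(‖l‖⁻¹:ℝ) • l, u i⟫ +
      ‖l‖ * ∑ i, d i * ⟪(‖l‖⁻¹:ℝ) • l, u i⟫ ^ 2 / (1 - ‖l‖ * ⟪(‖l‖⁻¹:ℝ) • l, u i⟫) := by
    have : ∑ i, d i * ⟪(‖l‖⁻¹:ℝ) • l, u i⟫ +
        ‖l‖ * ∑ i, d i * ⟪(‖l‖⁻¹:ℝ) • l, u i⟫ ^ 2 / (1 - ‖l‖ * ⟪(‖l‖⁻¹:ℝ) • l, u i⟫)
        = ‖l‖⁻¹ * ∑ i, d i * ⟪l, u i⟫ / (1 - ⟪l, u i⟫) := by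
      rw [Finset.mul_sum, Finset.mul_sum, ← Finset.sum_add_distrib]
      refine Finset.sum_congr rfl fun i _ => ?_
      rw [hρt i, ht i]
      obtain ⟨s, hs⟩ : ∃ s, ⟪l, u i⟫ = s := ⟨_, rfl⟩
      have h1 : 1 - s ≠ 0 := hs ▸ hne i
      rw [hs]
      field_simp
      ring
    rw [this, key, mul_zero]
  refine ⟨part1, ?_⟩
  set Z := Finset.univ.sup' ⟨⟨0, hn⟩, Finset.mem_univ _⟩ fun i => ‖u i‖ with hZdef
  have hZ : ∀ i, ‖u i‖ ≤ Z := fun i => Finset.le_sup' (fun i => ‖u i‖) (Finset.mem_univ i)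
  have hZ0 : (0:ℝ) ≤ Z := le_trans (norm_nonneg _) (hZ ⟨0, hn⟩)
  have hθ : ‖(‖l‖⁻¹:ℝ) • l‖ = 1 := by
    rw [norm_smul]; simp [abs_of_pos (inv_pos.mpr hρ)]; field_simp
  have htb : ∀ i, |⟪(‖l‖⁻¹:ℝ) • l, u i⟫| ≤ Z := by
    intro i
    calc |⟪(‖l‖⁻¹:ℝ) • l, u i⟫| ≤ ‖(‖l‖⁻¹:ℝ) • l‖ * ‖u i‖ := abs_real_inner_le_norm _ _
    _ = ‖u i‖ := by rw [hθ, one_mul]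
    _ ≤ Z := hZ i
  have hbound : ∀ i, 1 - ‖l‖ * ⟪(‖l‖⁻¹:ℝ) • l, u i⟫ ≤ 1 + ‖l‖ * Z := by
    intro i
    have h1 : -⟪(‖l‖⁻¹:ℝ) • l, u i⟫ ≤ Z := (abs_le.mp (htb i)).1 |> neg_le.mpr |> fun h => by
      linarith [(abs_le.mp (htb i)).1]
    nlinarith [(abs_le.mp (htb i)).1, hρ.le]
  have hposθ : ∀ i, 0 < 1 - ‖l‖ * ⟪(‖l‖⁻¹:ℝ) • l, u i⟫ := fun i => by
    rw [hρt i]; exact hpos i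
  have hden : (0:ℝ) < 1 + ‖l‖ * Z := by positivity
  -- |S| = ρ * B with B ≥ 0
  set B := ∑ i, d i * ⟪(‖l‖⁻¹:ℝ) • l, u i⟫ ^ 2 / (1 - ‖l‖ * ⟪(‖l‖⁻¹:ℝ) • l, u i⟫) with hB
  have hBnn : 0 ≤ B := Finset.sum_nonneg fun i _ => by
    have := hd i; have := hposθ i; positivity
  have hS : ∑ i, d i * ⟪(‖l‖⁻¹:ℝ) • l, u i⟫ = -(‖l‖ * B) := by linarith [part1]
  rw [hS, abs_neg, abs_of_nonneg (by positivity)]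
  have step : ‖l‖ / (1 + ‖l‖ * Z) * ∑ i, d i * ⟪(‖l‖⁻¹:ℝ) • l, u i⟫ ^ 2 ≤ ‖l‖ * B := by
    rw [hB, Finset.mul_sum, Finset.mul_sum]
    refine Finset.sum_le_sum fun i _ => ?_
    rw [div_mul_eq_mul_div, mul_div_assoc]
    have hnn : 0 ≤ d i * ⟪(‖l‖⁻¹:ℝ) • l, u i⟫ ^ 2 := by have := (hd i).le; positivity
    gcongr
    · exact hposθ i
    · exact hbound i
  exact step
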